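/- Energy identity for the difference system (key identity in the proof of Lemma 3.6): Let (V,P) be a classical solution of the damped piezoelectric system on [0,L]×[0,T], and let Ṽ, P̃ be real-valued C² functions on [0,L]×[0,T] satisfying ρṼ_tt − αṼ_xx + γβP̃_xx = 0, μP̃_tt − βP̃_xx + γβṼ_xx = 0, Ṽ(0,t) = P̃(0,t) = 0, αṼ_x(L,t) − γβP̃_x(L,t) + m₁Ṽ_tt(L,t) = 0 and βP̃_x(L,t) − γβṼ_x(L,t) + m₂P̃_tt(L,t) = 0, with the same initial data: Ṽ(x,0) = V(x,0), Ṽ_t(x,0) = V_t(x,0), P̃(x,0) = P(x,0), P̃_t(x,0) = P_t(x,0) for all x ∈ [0,L]. Set V̂ = V − Ṽ and P̂ = P − P̃. Then ∫₀ᴸ( ρV̂_t(x,T)² + α₁V̂_x(x,T)² + μP̂_t(x,T)² + β(γV̂_x − P̂_x)(x,T)² )dx + m₁V̂_t(L,T)² + m₂P̂_t(L,T)² = −2ξ₁∫₀ᵀ V_t(L,t)·V̂_t(L,t) dt − 2ξ₂∫₀ᵀ P_t(L,t)·P̂_t(L,t) dt. -/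

import Mathlib

/-- Partial derivative in time of a function `V : ℝ → ℝ → ℝ` (first argument: space,
second argument: time). -/
noncomputable def partialT (V : ℝ → ℝ → ℝ) (x t : ℝ) : ℝ := deriv (fun s => V x s) t

/-- Second partial derivative in time. -/
noncomputable def partialTT (V : ℝ → ℝ → ℝ) (x t : ℝ) : ℝ := deriv (fun s => partialT V x s) t

/-- Partial derivative in space. -/
noncomputable def partialX (V : ℝ → ℝ → ℝ) (x t : ℝ) : ℝ := deriv (fun y => V y t) x

/-- Second partial derivative in space. -/
noncomputable def partialXX (V : ℝ → ℝ → ℝ) (x t : ℝ) : ℝ := deriv (fun y => partialX V y t) x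

/- ### Auxiliary machinery -/

noncomputable def dX (H : ℝ × ℝ → ℝ) (p : ℝ × ℝ) : ℝ := fderiv ℝ H p (1, 0)
noncomputable def dT (H : ℝ × ℝ → ℝ) (p : ℝ × ℝ) : ℝ := fderiv ℝ H p (0, 1)

lemma sliceT (H : ℝ × ℝ → ℝ) (hH : Differentiable ℝ H) (x t : ℝ) :
    HasDerivAt (fun s => H (x, s)) (dT H (x, t)) t :=
  (hH (x, t)).hasFDerivAt.comp_hasDerivAt t (HasDerivAt.prodMk (hasDerivAt_const t x) (hasDerivAt_id t))

lemma sliceX (H : ℝ × ℝ → ℝ) (hH : Differentiable ℝ H) (x t : ℝ) :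
    HasDerivAt (fun y => H (y, t)) (dX H (x, t)) x :=
  (hH (x, t)).hasFDerivAt.comp_hasDerivAt x (HasDerivAt.prodMk (hasDerivAt_id x) (hasDerivAt_const x t))

lemma contDiff_dT {H : ℝ × ℝ → ℝ} (hH : ContDiff ℝ 2 H) : ContDiff ℝ 1 (dT H) :=
  (hH.fderiv_right (by norm_num)).clm_apply contDiff_const

lemma contDiff_dX {H : ℝ × ℝ → ℝ} (hH : ContDiff ℝ 2 H) : ContDiff ℝ 1 (dX H) :=
  (hH.fderiv_right (by norm_num)).clm_apply contDiff_const

lemma continuous_dT {H : ℝ × ℝ → ℝ} (hH : ContDiff ℝ 1 H) : Continuous (dT H) :=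
  ((hH.fderiv_right (m := 0) (by norm_num)).clm_apply contDiff_const).continuous

lemma continuous_dX {H : ℝ × ℝ → ℝ} (hH : ContDiff ℝ 1 H) : Continuous (dX H) :=
  ((hH.fderiv_right (m := 0) (by norm_num)).clm_apply contDiff_const).continuous

lemma clairaut {H : ℝ × ℝ → ℝ} (hH : ContDiff ℝ 2 H) (p : ℝ × ℝ) :
    dT (dX H) p = dX (dT H) p := by
  have hd : Differentiable ℝ H := hH.differentiable (by norm_num)
  have hd1 : ContDiff ℝ 1 (fderiv ℝ H) := hH.fderiv_right (by norm_num)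
  have hdf : DifferentiableAt ℝ (fderiv ℝ H) p := hd1.differentiable (by norm_num) p
  have hsymm := second_derivative_symmetric (f := H) (f' := fderiv ℝ H)
      (f'' := fderiv ℝ (fderiv ℝ H) p) (fun y => (hd y).hasFDerivAt) hdf.hasFDerivAt
  have e1 : dT (dX H) p = (fderiv ℝ (fderiv ℝ H) p (0, 1)) (1, 0) := by
    unfold dT dX
    rw [fderiv_clm_apply hdf (differentiableAt_const _)]
    simp
  have e2 : dX (dT H) p = (fderiv ℝ (fderiv ℝ H) p (1, 0)) (0, 1) := by
    unfold dT dX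
    rw [fderiv_clm_apply hdf (differentiableAt_const _)]
    simp
  rw [e1, e2, hsymm]

lemma dT_sub {Hv Hw : ℝ × ℝ → ℝ} (hv : Differentiable ℝ Hv) (hw : Differentiable ℝ Hw)
    (p : ℝ × ℝ) : dT (fun q => Hv q - Hw q) p = dT Hv p - dT Hw p := by
  unfold dT; rw [fderiv_fun_sub (hv p) (hw p)]; simp

lemma dX_sub {Hv Hw : ℝ × ℝ → ℝ} (hv : Differentiable ℝ Hv) (hw : Differentiable ℝ Hw)
    (p : ℝ × ℝ) : dX (fun q => Hv q - Hw q) p = dX Hv p - dX Hw p := by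
  unfold dX; rw [fderiv_fun_sub (hv p) (hw p)]; simp

lemma dTdT_sub {Hv Hw : ℝ × ℝ → ℝ} (hv : ContDiff ℝ 2 Hv) (hw : ContDiff ℝ 2 Hw)
    (p : ℝ × ℝ) : dT (dT (fun q => Hv q - Hw q)) p = dT (dT Hv) p - dT (dT Hw) p := by
  have h : dT (fun q => Hv q - Hw q) = fun q => dT Hv q - dT Hw q :=
    funext (dT_sub (hv.differentiable (by norm_num)) (hw.differentiable (by norm_num)))
  rw [h, dT_sub ((contDiff_dT hv).differentiable (by norm_num)) ((contDiff_dT hw).differentiable (by norm_num))]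

lemma dXdX_sub {Hv Hw : ℝ × ℝ → ℝ} (hv : ContDiff ℝ 2 Hv) (hw : ContDiff ℝ 2 Hw)
    (p : ℝ × ℝ) : dX (dX (fun q => Hv q - Hw q)) p = dX (dX Hv) p - dX (dX Hw) p := by
  have h : dX (fun q => Hv q - Hw q) = fun q => dX Hv q - dX Hw q :=
    funext (dX_sub (hv.differentiable (by norm_num)) (hw.differentiable (by norm_num)))
  rw [h, dX_sub ((contDiff_dX hv).differentiable (by norm_num)) ((contDiff_dX hw).differentiable (by norm_num))]

lemma partialT_eq {V : ℝ → ℝ → ℝ} (hV : Differentiable ℝ (fun p : ℝ × ℝ => V p.1 p.2))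
    (x t : ℝ) : partialT V x t = dT (fun p : ℝ × ℝ => V p.1 p.2) (x, t) :=
  (sliceT _ hV x t).deriv

lemma partialX_eq {V : ℝ → ℝ → ℝ} (hV : Differentiable ℝ (fun p : ℝ × ℝ => V p.1 p.2))
    (x t : ℝ) : partialX V x t = dX (fun p : ℝ × ℝ => V p.1 p.2) (x, t) :=
  (sliceX _ hV x t).deriv

lemma partialTT_eq {V : ℝ → ℝ → ℝ} (hV : ContDiff ℝ 2 (fun p : ℝ × ℝ => V p.1 p.2))
    (x t : ℝ) : partialTT V x t = dT (dT (fun p : ℝ × ℝ => V p.1 p.2)) (x, t) := by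
  have h : (fun s => partialT V x s) = fun s => dT (fun p : ℝ × ℝ => V p.1 p.2) (x, s) :=
    funext fun s => partialT_eq (hV.differentiable (by norm_num)) x s
  rw [partialTT, h]
  exact (sliceT _ ((contDiff_dT hV).differentiable (by norm_num)) x t).deriv

lemma partialXX_eq {V : ℝ → ℝ → ℝ} (hV : ContDiff ℝ 2 (fun p : ℝ × ℝ => V p.1 p.2))
    (x t : ℝ) : partialXX V x t = dX (dX (fun p : ℝ × ℝ => V p.1 p.2)) (x, t) := by
  have h : (fun y => partialX V y t) = fun y => dX (fun p : ℝ × ℝ => V p.1 p.2) (y, t) :=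
    funext fun y => partialX_eq (hV.differentiable (by norm_num)) y t
  rw [partialXX, h]
  exact (sliceX _ ((contDiff_dX hV).differentiable (by norm_num)) x t).deriv

/- energy density, its time derivative, and the flux -/

noncomputable def eFun (ρ μ β γ α : ℝ) (F G : ℝ × ℝ → ℝ) (p : ℝ × ℝ) : ℝ :=
  ρ / 2 * (dT F p) ^ 2 + μ / 2 * (dT G p) ^ 2 + α / 2 * (dX F p) ^ 2
    - γ * β * (dX F p * dX G p) + β / 2 * (dX G p) ^ 2

noncomputable def gFun (ρ μ β γ α : ℝ) (F G : ℝ × ℝ → ℝ) (p : ℝ × ℝ) : ℝ :=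
  ρ * (dT F p * dT (dT F) p) + μ * (dT G p * dT (dT G) p)
    + α * (dX F p * dT (dX F) p)
    - γ * β * (dT (dX F) p * dX G p + dX F p * dT (dX G) p)
    + β * (dX G p * dT (dX G) p)

noncomputable def phiFun (β γ α : ℝ) (F G : ℝ × ℝ → ℝ) (p : ℝ × ℝ) : ℝ :=
  (α * dX F p - γ * β * dX G p) * dT F p + (β * dX G p - γ * β * dX F p) * dT G p

lemma continuous_gFun {F G : ℝ × ℝ → ℝ} (hF : ContDiff ℝ 2 F) (hG : ContDiff ℝ 2 G)
    (ρ μ β γ α : ℝ) : Continuous (gFun ρ μ β γ α F G) := by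
  unfold gFun
  have cFt := (contDiff_dT hF).continuous
  have cGt := (contDiff_dT hG).continuous
  have cFx := (contDiff_dX hF).continuous
  have cGx := (contDiff_dX hG).continuous
  have cFtt := continuous_dT (contDiff_dT hF)
  have cGtt := continuous_dT (contDiff_dT hG)
  have cFxt := continuous_dT (contDiff_dX hF)
  have cGxt := continuous_dT (contDiff_dX hG)
  fun_prop

lemma continuous_eFun {F G : ℝ × ℝ → ℝ} (hF : ContDiff ℝ 2 F) (hG : ContDiff ℝ 2 G)
    (ρ μ β γ α : ℝ) : Continuous (eFun ρ μ β γ α F G) := by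
  unfold eFun
  have cFt := (contDiff_dT hF).continuous
  have cGt := (contDiff_dT hG).continuous
  have cFx := (contDiff_dX hF).continuous
  have cGx := (contDiff_dX hG).continuous
  fun_prop

lemma continuous_phiFun {F G : ℝ × ℝ → ℝ} (hF : ContDiff ℝ 2 F) (hG : ContDiff ℝ 2 G)
    (β γ α : ℝ) : Continuous (phiFun β γ α F G) := by
  unfold phiFun
  have cFt := (contDiff_dT hF).continuous
  have cGt := (contDiff_dT hG).continuous
  have cFx := (contDiff_dX hF).continuous
  have cGx := (contDiff_dX hG).continuous
  fun_prop

lemma hasDerivAt_eSlice {F G : ℝ × ℝ → ℝ} (hF : ContDiff ℝ 2 F) (hG : ContDiff ℝ 2 G)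
    (ρ μ β γ α x t : ℝ) :
    HasDerivAt (fun s => eFun ρ μ β γ α F G (x, s)) (gFun ρ μ β γ α F G (x, t)) t := by
  have hFt := sliceT (dT F) ((contDiff_dT hF).differentiable (by norm_num)) x t
  have hGt := sliceT (dT G) ((contDiff_dT hG).differentiable (by norm_num)) x t
  have hFx := sliceT (dX F) ((contDiff_dX hF).differentiable (by norm_num)) x t
  have hGx := sliceT (dX G) ((contDiff_dX hG).differentiable (by norm_num)) x t
  have H := ((((((hFt.pow 2).const_mul (ρ / 2)).add ((hGt.pow 2).const_mul (μ / 2))).add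
      ((hFx.pow 2).const_mul (α / 2))).sub ((hFx.mul hGx).const_mul (γ * β))).add
      ((hGx.pow 2).const_mul (β / 2)))
  unfold eFun gFun
  exact H.congr_deriv (by push_cast; ring)

lemma hasDerivAt_phiSlice {F G : ℝ × ℝ → ℝ} (hF : ContDiff ℝ 2 F) (hG : ContDiff ℝ 2 G)
    (β γ α x t : ℝ) :
    HasDerivAt (fun y => phiFun β γ α F G (y, t))
      ((α * dX (dX F) (x, t) - γ * β * dX (dX G) (x, t)) * dT F (x, t)
        + (α * dX F (x, t) - γ * β * dX G (x, t)) * dX (dT F) (x, t)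
        + (β * dX (dX G) (x, t) - γ * β * dX (dX F) (x, t)) * dT G (x, t)
        + (β * dX G (x, t) - γ * β * dX F (x, t)) * dX (dT G) (x, t)) x := by
  have hFt := sliceX (dT F) ((contDiff_dT hF).differentiable (by norm_num)) x t
  have hGt := sliceX (dT G) ((contDiff_dT hG).differentiable (by norm_num)) x t
  have hFx := sliceX (dX F) ((contDiff_dX hF).differentiable (by norm_num)) x t
  have hGx := sliceX (dX G) ((contDiff_dX hG).differentiable (by norm_num)) x t
  have H := ((((hFx.const_mul α).sub (hGx.const_mul (γ * β))).mul hFt).add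
      (((hGx.const_mul β).sub (hFx.const_mul (γ * β))).mul hGt))
  unfold phiFun
  exact H.congr_deriv (by simp only [Pi.sub_apply]; ring)

lemma swap_integrals {g : ℝ × ℝ → ℝ} (hg : Continuous g) {L T : ℝ} (hL : 0 ≤ L) (hT : 0 ≤ T) :
    (∫ x in (0:ℝ)..L, ∫ t in (0:ℝ)..T, g (x, t))
      = ∫ t in (0:ℝ)..T, ∫ x in (0:ℝ)..L, g (x, t) := by
  rw [intervalIntegral.integral_of_le hL, intervalIntegral.integral_of_le hT]
  simp_rw [intervalIntegral.integral_of_le hT, intervalIntegral.integral_of_le hL]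
  apply MeasureTheory.integral_integral_swap
  have : Function.uncurry (fun x t => g (x, t)) = g := by
    funext p; simp [Function.uncurry]
  rw [this, MeasureTheory.Measure.prod_restrict, ← MeasureTheory.Measure.volume_eq_prod]
  exact ((hg.continuousOn.integrableOn_compact (isCompact_Icc.prod isCompact_Icc)).mono_set
    (Set.prod_mono Set.Ioc_subset_Icc_self Set.Ioc_subset_Icc_self))

open MeasureTheory intervalIntegral in
lemma core (ρ μ β γ α m₁ m₂ L T : ℝ) (hL : 0 < L) (hT : 0 < T)
    (F G : ℝ × ℝ → ℝ) (f₁ f₂ : ℝ → ℝ) (hf₁ : Continuous f₁) (hf₂ : Continuous f₂)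
    (hF : ContDiff ℝ 2 F) (hG : ContDiff ℝ 2 G)
    (pde1 : ∀ x ∈ Set.Icc (0:ℝ) L, ∀ t ∈ Set.Icc (0:ℝ) T,
      ρ * dT (dT F) (x, t) - α * dX (dX F) (x, t) + γ * β * dX (dX G) (x, t) = 0)
    (pde2 : ∀ x ∈ Set.Icc (0:ℝ) L, ∀ t ∈ Set.Icc (0:ℝ) T,
      μ * dT (dT G) (x, t) - β * dX (dX G) (x, t) + γ * β * dX (dX F) (x, t) = 0)
    (bF : ∀ t ∈ Set.Icc (0:ℝ) T,
      α * dX F (L, t) - γ * β * dX G (L, t) + m₁ * dT (dT F) (L, t) = - f₁ t)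
    (bG : ∀ t ∈ Set.Icc (0:ℝ) T,
      β * dX G (L, t) - γ * β * dX F (L, t) + m₂ * dT (dT G) (L, t) = - f₂ t)
    (hbc : ∀ t ∈ Set.Ioo (0:ℝ) T, dT F (0, t) = 0 ∧ dT G (0, t) = 0)
    (hiF : ∀ x ∈ Set.Icc (0:ℝ) L, dT F (x, 0) = 0)
    (hiG : ∀ x ∈ Set.Icc (0:ℝ) L, dT G (x, 0) = 0)
    (hiFx : ∀ x ∈ Set.Ioo (0:ℝ) L, dX F (x, 0) = 0)
    (hiGx : ∀ x ∈ Set.Ioo (0:ℝ) L, dX G (x, 0) = 0) :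
    (∫ x in (0:ℝ)..L, 2 * eFun ρ μ β γ α F G (x, T))
        + m₁ * (dT F (L, T)) ^ 2 + m₂ * (dT G (L, T)) ^ 2
      = -2 * (∫ t in (0:ℝ)..T, f₁ t * dT F (L, t))
        - 2 * (∫ t in (0:ℝ)..T, f₂ t * dT G (L, t)) := by
  have hgC := continuous_gFun hF hG ρ μ β γ α
  have heC := continuous_eFun hF hG ρ μ β γ α
  have hφC := continuous_phiFun hF hG β γ α
  have hFtC : Continuous (dT F) := (contDiff_dT hF).continuous
  have hGtC : Continuous (dT G) := (contDiff_dT hG).continuous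
  have hFttC : Continuous (dT (dT F)) := continuous_dT (contDiff_dT hF)
  have hGttC : Continuous (dT (dT G)) := continuous_dT (contDiff_dT hG)
  have hFtL : Continuous (fun t => dT F (L, t)) :=
    hFtC.comp (continuous_const.prodMk continuous_id)
  have hGtL : Continuous (fun t => dT G (L, t)) :=
    hGtC.comp (continuous_const.prodMk continuous_id)
  have hFttL : Continuous (fun t => dT (dT F) (L, t)) :=
    hFttC.comp (continuous_const.prodMk continuous_id)
  have hGttL : Continuous (fun t => dT (dT G) (L, t)) :=
    hGttC.comp (continuous_const.prodMk continuous_id)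
  -- Step A : time FTC at fixed x
  have SA : ∀ x : ℝ, (∫ t in (0:ℝ)..T, gFun ρ μ β γ α F G (x, t))
      = eFun ρ μ β γ α F G (x, T) - eFun ρ μ β γ α F G (x, 0) := fun x =>
    intervalIntegral.integral_eq_sub_of_hasDerivAt
      (fun t _ => hasDerivAt_eSlice hF hG ρ μ β γ α x t)
      ((hgC.comp (continuous_const.prodMk continuous_id)).intervalIntegrable 0 T)
  -- Step B : space FTC at fixed t
  have SB : ∀ t ∈ Set.Icc (0:ℝ) T, (∫ x in (0:ℝ)..L, gFun ρ μ β γ α F G (x, t))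
      = phiFun β γ α F G (L, t) - phiFun β γ α F G (0, t) := by
    intro t ht
    refine intervalIntegral.integral_eq_sub_of_hasDerivAt
      (f := fun x => phiFun β γ α F G (x, t))
      (f' := fun x => gFun ρ μ β γ α F G (x, t)) (fun x hx => ?_)
      ((hgC.comp (continuous_id.prodMk continuous_const)).intervalIntegrable 0 L)
    rw [Set.uIcc_of_le hL.le] at hx
    refine (hasDerivAt_phiSlice hF hG β γ α x t).congr_deriv ?_
    have p1 := pde1 x hx t ht
    have p2 := pde2 x hx t ht
    have c1 := clairaut hF (x, t)
    have c2 := clairaut hG (x, t)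
    rw [← c1, ← c2]
    unfold gFun
    linear_combination (-(dT F (x, t))) * p1 + (-(dT G (x, t))) * p2
  -- vanishing of the initial energy
  have h4 : (∫ x in (0:ℝ)..L, eFun ρ μ β γ α F G (x, 0)) = 0 := by
    rw [intervalIntegral.integral_of_le hL.le]
    apply MeasureTheory.integral_eq_zero_of_ae
    rw [Filter.EventuallyEq, MeasureTheory.ae_restrict_iff' measurableSet_Ioc]
    have hL0 : (volume ({L} : Set ℝ)) = 0 := measure_singleton L
    filter_upwards [MeasureTheory.compl_mem_ae_iff.2 hL0] with x hx hxI
    have hx' : x ≠ L := by simpa using hx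
    have hxo : x ∈ Set.Ioo (0:ℝ) L := ⟨hxI.1, lt_of_le_of_ne hxI.2 hx'⟩
    have e1 := hiF x (Set.Ioc_subset_Icc_self hxI)
    have e2 := hiG x (Set.Ioc_subset_Icc_self hxI)
    have e3 := hiFx x hxo
    have e4 := hiGx x hxo
    simp [eFun, e1, e2, e3, e4]
  -- vanishing of the flux at x = 0
  have h5 : (∫ t in (0:ℝ)..T, phiFun β γ α F G (0, t)) = 0 := by
    rw [intervalIntegral.integral_of_le hT.le]
    apply MeasureTheory.integral_eq_zero_of_ae
    rw [Filter.EventuallyEq, MeasureTheory.ae_restrict_iff' measurableSet_Ioc]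
    have hT0 : (volume ({T} : Set ℝ)) = 0 := measure_singleton T
    filter_upwards [MeasureTheory.compl_mem_ae_iff.2 hT0] with t htc htI
    have ht' : t ≠ T := by simpa using htc
    have hto : t ∈ Set.Ioo (0:ℝ) T := ⟨htI.1, lt_of_le_of_ne htI.2 ht'⟩
    have e1 := (hbc t hto).1
    have e2 := (hbc t hto).2
    simp [phiFun, e1, e2]
  -- chaining the identities
  have i_eT : IntervalIntegrable (fun x => eFun ρ μ β γ α F G (x, T)) volume 0 L :=
    (heC.comp (continuous_id.prodMk continuous_const)).intervalIntegrable 0 L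
  have i_e0 : IntervalIntegrable (fun x => eFun ρ μ β γ α F G (x, 0)) volume 0 L :=
    (heC.comp (continuous_id.prodMk continuous_const)).intervalIntegrable 0 L
  have hsub1 : (∫ x in (0:ℝ)..L,
        (eFun ρ μ β γ α F G (x, T) - eFun ρ μ β γ α F G (x, 0)))
      = (∫ x in (0:ℝ)..L, eFun ρ μ β γ α F G (x, T))
        - ∫ x in (0:ℝ)..L, eFun ρ μ β γ α F G (x, 0) :=
    intervalIntegral.integral_sub i_eT i_e0
  have h1 : (∫ x in (0:ℝ)..L,
        (eFun ρ μ β γ α F G (x, T) - eFun ρ μ β γ α F G (x, 0)))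
      = ∫ x in (0:ℝ)..L, ∫ t in (0:ℝ)..T, gFun ρ μ β γ α F G (x, t) :=
    intervalIntegral.integral_congr fun x _ => (SA x).symm
  have h2 := swap_integrals hgC hL.le hT.le
  have h3 : (∫ t in (0:ℝ)..T, ∫ x in (0:ℝ)..L, gFun ρ μ β γ α F G (x, t))
      = ∫ t in (0:ℝ)..T, (phiFun β γ α F G (L, t) - phiFun β γ α F G (0, t)) :=
    intervalIntegral.integral_congr fun t ht =>
      SB t (by rwa [Set.uIcc_of_le hT.le] at ht)
  have i_φL : IntervalIntegrable (fun t => phiFun β γ α F G (L, t)) volume 0 T :=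
    (hφC.comp (continuous_const.prodMk continuous_id)).intervalIntegrable 0 T
  have i_φ0 : IntervalIntegrable (fun t => phiFun β γ α F G (0, t)) volume 0 T :=
    (hφC.comp (continuous_const.prodMk continuous_id)).intervalIntegrable 0 T
  have hsub2 : (∫ t in (0:ℝ)..T,
        (phiFun β γ α F G (L, t) - phiFun β γ α F G (0, t)))
      = (∫ t in (0:ℝ)..T, phiFun β γ α F G (L, t))
        - ∫ t in (0:ℝ)..T, phiFun β γ α F G (0, t) :=
    intervalIntegral.integral_sub i_φL i_φ0
  have key : (∫ x in (0:ℝ)..L, eFun ρ μ β γ α F G (x, T))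
      = ∫ t in (0:ℝ)..T, phiFun β γ α F G (L, t) := by linarith
  -- FTC for the tip terms
  have K1 : (∫ t in (0:ℝ)..T, dT F (L, t) * dT (dT F) (L, t))
      = (dT F (L, T)) ^ 2 / 2 := by
    have hftc := intervalIntegral.integral_eq_sub_of_hasDerivAt
      (f := fun s => (dT F (L, s)) ^ 2 / 2)
      (f' := fun t => dT F (L, t) * dT (dT F) (L, t))
      (fun t _ => (((sliceT (dT F) ((contDiff_dT hF).differentiable (by norm_num)) L t).pow 2).div_const
        2).congr_deriv (by push_cast; ring))
      ((hFtL.mul hFttL).intervalIntegrable 0 T)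
    rw [hftc]
    simp only [hiF L ⟨hL.le, le_refl L⟩]
    ring
  have K2 : (∫ t in (0:ℝ)..T, dT G (L, t) * dT (dT G) (L, t))
      = (dT G (L, T)) ^ 2 / 2 := by
    have hftc := intervalIntegral.integral_eq_sub_of_hasDerivAt
      (f := fun s => (dT G (L, s)) ^ 2 / 2)
      (f' := fun t => dT G (L, t) * dT (dT G) (L, t))
      (fun t _ => (((sliceT (dT G) ((contDiff_dT hG).differentiable (by norm_num)) L t).pow 2).div_const
        2).congr_deriv (by push_cast; ring))
      ((hGtL.mul hGttL).intervalIntegrable 0 T)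
    rw [hftc]
    simp only [hiG L ⟨hL.le, le_refl L⟩]
    ring
  -- boundary flux at x = L
  have SL : (∫ t in (0:ℝ)..T, phiFun β γ α F G (L, t))
      = -(m₁ * ((dT F (L, T)) ^ 2 / 2))
        - (∫ t in (0:ℝ)..T, f₁ t * dT F (L, t))
        - m₂ * ((dT G (L, T)) ^ 2 / 2)
        - ∫ t in (0:ℝ)..T, f₂ t * dT G (L, t) := by
    have hcong : Set.EqOn (fun t => phiFun β γ α F G (L, t))
        (fun t => -(m₁ * (dT F (L, t) * dT (dT F) (L, t))) - f₁ t * dT F (L, t)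
          - m₂ * (dT G (L, t) * dT (dT G) (L, t)) - f₂ t * dT G (L, t))
        (Set.uIcc (0:ℝ) T) := by
      intro t ht
      rw [Set.uIcc_of_le hT.le] at ht
      have b1 := bF t ht
      have b2 := bG t ht
      simp only [phiFun]
      linear_combination (dT F (L, t)) * b1 + (dT G (L, t)) * b2
    rw [intervalIntegral.integral_congr hcong]
    have ia : IntervalIntegrable (fun t => -(m₁ * (dT F (L, t) * dT (dT F) (L, t))))
        volume 0 T := ((continuous_const.mul (hFtL.mul hFttL)).neg).intervalIntegrable 0 T
    have ib : IntervalIntegrable (fun t => f₁ t * dT F (L, t)) volume 0 T :=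
      (hf₁.mul hFtL).intervalIntegrable 0 T
    have ic : IntervalIntegrable (fun t => m₂ * (dT G (L, t) * dT (dT G) (L, t)))
        volume 0 T := (continuous_const.mul (hGtL.mul hGttL)).intervalIntegrable 0 T
    have id' : IntervalIntegrable (fun t => f₂ t * dT G (L, t)) volume 0 T :=
      (hf₂.mul hGtL).intervalIntegrable 0 T
    rw [intervalIntegral.integral_sub ((ia.sub ib).sub ic) id',
        intervalIntegral.integral_sub (ia.sub ib) ic,
        intervalIntegral.integral_sub ia ib,
        intervalIntegral.integral_neg, intervalIntegral.integral_const_mul,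
        intervalIntegral.integral_const_mul, K1, K2]
  have h2L : (∫ x in (0:ℝ)..L, 2 * eFun ρ μ β γ α F G (x, T))
      = 2 * ∫ x in (0:ℝ)..L, eFun ρ μ β γ α F G (x, T) :=
    intervalIntegral.integral_const_mul 2 _
  rw [h2L, key, SL]
  ring

/-- Energy identity for the difference between the damped solution `(V, P)` and the
undamped (conservative, tip-body) solution `(W, Q)` with the same initial data. -/
theorem difference_energy_identity
    (ρ μ β m₁ m₂ ξ₁ ξ₂ L T γ α₁ α : ℝ)
    (hρ : 0 < ρ) (hμ : 0 < μ) (hβ : 0 < β) (hm₁ : 0 < m₁) (hm₂ : 0 < m₂)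
    (hξ₁ : 0 < ξ₁) (hξ₂ : 0 < ξ₂) (hL : 0 < L) (hT : 0 < T) (hα₁ : 0 < α₁)
    (hα : α = α₁ + γ ^ 2 * β)
    (V P W Q : ℝ → ℝ → ℝ)
    (hV : ContDiff ℝ 2 (fun p : ℝ × ℝ => V p.1 p.2))
    (hP : ContDiff ℝ 2 (fun p : ℝ × ℝ => P p.1 p.2))
    (hW : ContDiff ℝ 2 (fun p : ℝ × ℝ => W p.1 p.2))
    (hQ : ContDiff ℝ 2 (fun p : ℝ × ℝ => Q p.1 p.2))
    -- (V, P) is a classical solution of the damped system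
    (heq1 : ∀ x ∈ Set.Icc (0:ℝ) L, ∀ t ∈ Set.Icc (0:ℝ) T,
      ρ * partialTT V x t - α * partialXX V x t + γ * β * partialXX P x t = 0)
    (heq2 : ∀ x ∈ Set.Icc (0:ℝ) L, ∀ t ∈ Set.Icc (0:ℝ) T,
      μ * partialTT P x t - β * partialXX P x t + γ * β * partialXX V x t = 0)
    (hbc0 : ∀ t ∈ Set.Icc (0:ℝ) T, V 0 t = 0 ∧ P 0 t = 0)
    (hbcV : ∀ t ∈ Set.Icc (0:ℝ) T,
      α * partialX V L t - γ * β * partialX P L t + ξ₁ * partialT V L t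
        + m₁ * partialTT V L t = 0)
    (hbcP : ∀ t ∈ Set.Icc (0:ℝ) T,
      β * partialX P L t - γ * β * partialX V L t + ξ₂ * partialT P L t
        + m₂ * partialTT P L t = 0)
    -- (W, Q) solves the undamped system with tip body
    (heq1' : ∀ x ∈ Set.Icc (0:ℝ) L, ∀ t ∈ Set.Icc (0:ℝ) T,
      ρ * partialTT W x t - α * partialXX W x t + γ * β * partialXX Q x t = 0)
    (heq2' : ∀ x ∈ Set.Icc (0:ℝ) L, ∀ t ∈ Set.Icc (0:ℝ) T,
      μ * partialTT Q x t - β * partialXX Q x t + γ * β * partialXX W x t = 0)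
    (hbc0' : ∀ t ∈ Set.Icc (0:ℝ) T, W 0 t = 0 ∧ Q 0 t = 0)
    (hbcW : ∀ t ∈ Set.Icc (0:ℝ) T,
      α * partialX W L t - γ * β * partialX Q L t + m₁ * partialTT W L t = 0)
    (hbcQ : ∀ t ∈ Set.Icc (0:ℝ) T,
      β * partialX Q L t - γ * β * partialX W L t + m₂ * partialTT Q L t = 0)
    -- same initial data
    (hinit1 : ∀ x ∈ Set.Icc (0:ℝ) L, W x 0 = V x 0)
    (hinit2 : ∀ x ∈ Set.Icc (0:ℝ) L, partialT W x 0 = partialT V x 0)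
    (hinit3 : ∀ x ∈ Set.Icc (0:ℝ) L, Q x 0 = P x 0)
    (hinit4 : ∀ x ∈ Set.Icc (0:ℝ) L, partialT Q x 0 = partialT P x 0) :
    (∫ x in (0:ℝ)..L,
        (ρ * (partialT V x T - partialT W x T) ^ 2
          + α₁ * (partialX V x T - partialX W x T) ^ 2
          + μ * (partialT P x T - partialT Q x T) ^ 2
          + β * (γ * (partialX V x T - partialX W x T)
              - (partialX P x T - partialX Q x T)) ^ 2))
      + m₁ * (partialT V L T - partialT W L T) ^ 2
      + m₂ * (partialT P L T - partialT Q L T) ^ 2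
    = -2 * ξ₁ * (∫ t in (0:ℝ)..T, partialT V L t * (partialT V L t - partialT W L t))
      - 2 * ξ₂ * (∫ t in (0:ℝ)..T, partialT P L t * (partialT P L t - partialT Q L t)) := by
  have hVd : Differentiable ℝ (fun p : ℝ × ℝ => V p.1 p.2) := hV.differentiable (by norm_num)
  have hPd : Differentiable ℝ (fun p : ℝ × ℝ => P p.1 p.2) := hP.differentiable (by norm_num)
  have hWd : Differentiable ℝ (fun p : ℝ × ℝ => W p.1 p.2) := hW.differentiable (by norm_num)
  have hQd : Differentiable ℝ (fun p : ℝ × ℝ => Q p.1 p.2) := hQ.differentiable (by norm_num)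
  set F : ℝ × ℝ → ℝ := fun p => V p.1 p.2 - W p.1 p.2 with hFdef
  set G : ℝ × ℝ → ℝ := fun p => P p.1 p.2 - Q p.1 p.2 with hGdef
  have hF2 : ContDiff ℝ 2 F := hV.sub hW
  have hG2 : ContDiff ℝ 2 G := hP.sub hQ
  have hFd : Differentiable ℝ F := hF2.differentiable (by norm_num)
  have hGd : Differentiable ℝ G := hG2.differentiable (by norm_num)
  -- linking partial derivatives with directional derivatives of the differences
  have lFt : ∀ x t : ℝ, partialT V x t - partialT W x t = dT F (x, t) := by
    intro x t
    rw [partialT_eq hVd, partialT_eq hWd, hFdef, dT_sub hVd hWd]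
  have lGt : ∀ x t : ℝ, partialT P x t - partialT Q x t = dT G (x, t) := by
    intro x t
    rw [partialT_eq hPd, partialT_eq hQd, hGdef, dT_sub hPd hQd]
  have lFx : ∀ x t : ℝ, partialX V x t - partialX W x t = dX F (x, t) := by
    intro x t
    rw [partialX_eq hVd, partialX_eq hWd, hFdef, dX_sub hVd hWd]
  have lGx : ∀ x t : ℝ, partialX P x t - partialX Q x t = dX G (x, t) := by
    intro x t
    rw [partialX_eq hPd, partialX_eq hQd, hGdef, dX_sub hPd hQd]
  have lFtt : ∀ x t : ℝ, partialTT V x t - partialTT W x t = dT (dT F) (x, t) := by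
    intro x t
    rw [partialTT_eq hV, partialTT_eq hW, hFdef, dTdT_sub hV hW]
  have lGtt : ∀ x t : ℝ, partialTT P x t - partialTT Q x t = dT (dT G) (x, t) := by
    intro x t
    rw [partialTT_eq hP, partialTT_eq hQ, hGdef, dTdT_sub hP hQ]
  have lFxx : ∀ x t : ℝ, partialXX V x t - partialXX W x t = dX (dX F) (x, t) := by
    intro x t
    rw [partialXX_eq hV, partialXX_eq hW, hFdef, dXdX_sub hV hW]
  have lGxx : ∀ x t : ℝ, partialXX P x t - partialXX Q x t = dX (dX G) (x, t) := by
    intro x t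
    rw [partialXX_eq hP, partialXX_eq hQ, hGdef, dXdX_sub hP hQ]
  -- hypotheses of the core identity
  have pde1 : ∀ x ∈ Set.Icc (0:ℝ) L, ∀ t ∈ Set.Icc (0:ℝ) T,
      ρ * dT (dT F) (x, t) - α * dX (dX F) (x, t) + γ * β * dX (dX G) (x, t) = 0 := by
    intro x hx t ht
    have h1 := heq1 x hx t ht
    have h2 := heq1' x hx t ht
    have e1 := lFtt x t
    have e2 := lFxx x t
    have e3 := lGxx x t
    linear_combination h1 - h2 - ρ * e1 + α * e2 - γ * β * e3
  have pde2 : ∀ x ∈ Set.Icc (0:ℝ) L, ∀ t ∈ Set.Icc (0:ℝ) T,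
      μ * dT (dT G) (x, t) - β * dX (dX G) (x, t) + γ * β * dX (dX F) (x, t) = 0 := by
    intro x hx t ht
    have h1 := heq2 x hx t ht
    have h2 := heq2' x hx t ht
    have e1 := lGtt x t
    have e2 := lGxx x t
    have e3 := lFxx x t
    linear_combination h1 - h2 - μ * e1 + β * e2 - γ * β * e3
  have bF : ∀ t ∈ Set.Icc (0:ℝ) T,
      α * dX F (L, t) - γ * β * dX G (L, t) + m₁ * dT (dT F) (L, t)
        = -(ξ₁ * dT (fun p : ℝ × ℝ => V p.1 p.2) (L, t)) := by
    intro t ht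
    have b1 := hbcV t ht
    have b2 := hbcW t ht
    have e1 := lFx L t
    have e2 := lGx L t
    have e3 := lFtt L t
    have e4 : partialT V L t = dT (fun p : ℝ × ℝ => V p.1 p.2) (L, t) := partialT_eq hVd L t
    linear_combination b1 - b2 - α * e1 + γ * β * e2 - m₁ * e3 - ξ₁ * e4
  have bG : ∀ t ∈ Set.Icc (0:ℝ) T,
      β * dX G (L, t) - γ * β * dX F (L, t) + m₂ * dT (dT G) (L, t)
        = -(ξ₂ * dT (fun p : ℝ × ℝ => P p.1 p.2) (L, t)) := by
    intro t ht
    have b1 := hbcP t ht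
    have b2 := hbcQ t ht
    have e1 := lGx L t
    have e2 := lFx L t
    have e3 := lGtt L t
    have e4 : partialT P L t = dT (fun p : ℝ × ℝ => P p.1 p.2) (L, t) := partialT_eq hPd L t
    linear_combination b1 - b2 - β * e1 + γ * β * e2 - m₂ * e3 - ξ₂ * e4
  have hbc : ∀ t ∈ Set.Ioo (0:ℝ) T, dT F (0, t) = 0 ∧ dT G (0, t) = 0 := by
    intro t ht
    constructor
    · have heqf : (fun s => F (0, s)) =ᶠ[nhds t] (fun _ => (0:ℝ)) := by
        filter_upwards [Ioo_mem_nhds ht.1 ht.2] with s hs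
        have h1 := (hbc0 s (Set.Ioo_subset_Icc_self hs)).1
        have h2 := (hbc0' s (Set.Ioo_subset_Icc_self hs)).1
        simp [hFdef, h1, h2]
      rw [← (sliceT F hFd 0 t).deriv, heqf.deriv_eq]
      simp
    · have heqf : (fun s => G (0, s)) =ᶠ[nhds t] (fun _ => (0:ℝ)) := by
        filter_upwards [Ioo_mem_nhds ht.1 ht.2] with s hs
        have h1 := (hbc0 s (Set.Ioo_subset_Icc_self hs)).2
        have h2 := (hbc0' s (Set.Ioo_subset_Icc_self hs)).2
        simp [hGdef, h1, h2]
      rw [← (sliceT G hGd 0 t).deriv, heqf.deriv_eq]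
      simp
  have hiF : ∀ x ∈ Set.Icc (0:ℝ) L, dT F (x, 0) = 0 := by
    intro x hx
    rw [← lFt x 0, hinit2 x hx]
    ring
  have hiG : ∀ x ∈ Set.Icc (0:ℝ) L, dT G (x, 0) = 0 := by
    intro x hx
    rw [← lGt x 0, hinit4 x hx]
    ring
  have hiFx : ∀ x ∈ Set.Ioo (0:ℝ) L, dX F (x, 0) = 0 := by
    intro x hx
    have heqf : (fun y => F (y, 0)) =ᶠ[nhds x] (fun _ => (0:ℝ)) := by
      filter_upwards [Ioo_mem_nhds hx.1 hx.2] with y hy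
      have h1 := hinit1 y (Set.Ioo_subset_Icc_self hy)
      simp [hFdef, h1]
    rw [← (sliceX F hFd x 0).deriv, heqf.deriv_eq]
    simp
  have hiGx : ∀ x ∈ Set.Ioo (0:ℝ) L, dX G (x, 0) = 0 := by
    intro x hx
    have heqf : (fun y => G (y, 0)) =ᶠ[nhds x] (fun _ => (0:ℝ)) := by
      filter_upwards [Ioo_mem_nhds hx.1 hx.2] with y hy
      have h1 := hinit3 y (Set.Ioo_subset_Icc_self hy)
      simp [hGdef, h1]
    rw [← (sliceX G hGd x 0).deriv, heqf.deriv_eq]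
    simp
  have hf₁ : Continuous (fun t => ξ₁ * dT (fun p : ℝ × ℝ => V p.1 p.2) (L, t)) :=
    continuous_const.mul ((contDiff_dT hV).continuous.comp
      (continuous_const.prodMk continuous_id))
  have hf₂ : Continuous (fun t => ξ₂ * dT (fun p : ℝ × ℝ => P p.1 p.2) (L, t)) :=
    continuous_const.mul ((contDiff_dT hP).continuous.comp
      (continuous_const.prodMk continuous_id))
  have CORE := core ρ μ β γ α m₁ m₂ L T hL hT F G
    (fun t => ξ₁ * dT (fun p : ℝ × ℝ => V p.1 p.2) (L, t))
    (fun t => ξ₂ * dT (fun p : ℝ × ℝ => P p.1 p.2) (L, t))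
    hf₁ hf₂ hF2 hG2 pde1 pde2 bF bG hbc hiF hiG hiFx hiGx
  -- rewrite the goal into the language of the core identity
  have g1 : (∫ x in (0:ℝ)..L,
        (ρ * (partialT V x T - partialT W x T) ^ 2
          + α₁ * (partialX V x T - partialX W x T) ^ 2
          + μ * (partialT P x T - partialT Q x T) ^ 2
          + β * (γ * (partialX V x T - partialX W x T)
              - (partialX P x T - partialX Q x T)) ^ 2))
      = ∫ x in (0:ℝ)..L, 2 * eFun ρ μ β γ α F G (x, T) := by
    apply intervalIntegral.integral_congr
    intro x _
    dsimp only
    rw [lFt x T, lGt x T, lFx x T, lGx x T, hα]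
    simp only [eFun]
    ring
  have g2 : m₁ * (partialT V L T - partialT W L T) ^ 2 = m₁ * (dT F (L, T)) ^ 2 := by
    rw [lFt L T]
  have g3 : m₂ * (partialT P L T - partialT Q L T) ^ 2 = m₂ * (dT G (L, T)) ^ 2 := by
    rw [lGt L T]
  have g4 : (∫ t in (0:ℝ)..T, partialT V L t * (partialT V L t - partialT W L t))
      = ∫ t in (0:ℝ)..T, dT (fun p : ℝ × ℝ => V p.1 p.2) (L, t) * dT F (L, t) := by
    apply intervalIntegral.integral_congr
    intro t _
    dsimp only
    rw [lFt L t, partialT_eq hVd L t]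
  have g5 : (∫ t in (0:ℝ)..T, partialT P L t * (partialT P L t - partialT Q L t))
      = ∫ t in (0:ℝ)..T, dT (fun p : ℝ × ℝ => P p.1 p.2) (L, t) * dT G (L, t) := by
    apply intervalIntegral.integral_congr
    intro t _
    dsimp only
    rw [lGt L t, partialT_eq hPd L t]
  rw [g1, g2, g3, g4, g5]
  have r1 : (∫ t in (0:ℝ)..T,
        (ξ₁ * dT (fun p : ℝ × ℝ => V p.1 p.2) (L, t)) * dT F (L, t))
      = ξ₁ * ∫ t in (0:ℝ)..T, dT (fun p : ℝ × ℝ => V p.1 p.2) (L, t) * dT F (L, t) := by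
    rw [← intervalIntegral.integral_const_mul]
    apply intervalIntegral.integral_congr
    intro t _
    ring
  have r2 : (∫ t in (0:ℝ)..T,
        (ξ₂ * dT (fun p : ℝ × ℝ => P p.1 p.2) (L, t)) * dT G (L, t))
      = ξ₂ * ∫ t in (0:ℝ)..T, dT (fun p : ℝ × ℝ => P p.1 p.2) (L, t) * dT G (L, t) := by
    rw [← intervalIntegral.integral_const_mul]
    apply intervalIntegral.integral_congr
    intro t _
    ring
  rw [r1, r2] at CORE
  linarith
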